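/- Let (A, μ, Δ, α, β, ψ, ω) be a λ-infinitesimal BiHom-bialgebra. Then the map 𝔇 = μ∘Δ: A → A is a λ-(αω, βψ)-derivation; that is, 𝔇(ab) = αω(a)𝔇(b) + 𝔇(a)βψ(b) + λ αω(a)βψ(b) for all a,b ∈ A. -/
import Mathlib


open TensorProduct

open TensorProduct in
/-- `lam`-infinitesimal BiHom-bialgebra `(A, μ, Δ, α, β, ψ, ω)`. -/
def IsInfBHBialgebra (K A : Type*) [Field K] [AddCommGroup A] [Module K A] (lam : K)
    (μ : A →ₗ[K] A →ₗ[K] A) (Δ : A →ₗ[K] A ⊗[K] A)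
    (α β ψ ω : A →ₗ[K] A) : Prop :=
  -- BiHom-associative algebra
  (∀ a, α (β a) = β (α a)) ∧
  (∀ a b, α (μ a b) = μ (α a) (α b)) ∧
  (∀ a b, β (μ a b) = μ (β a) (β b)) ∧
  (∀ a b c, μ (α a) (μ b c) = μ (μ a b) (β c)) ∧
  -- BiHom-coassociative coalgebra
  (∀ a, ψ (ω a) = ω (ψ a)) ∧
  (TensorProduct.map ψ ψ ∘ₗ Δ = Δ ∘ₗ ψ) ∧
  (TensorProduct.map ω ω ∘ₗ Δ = Δ ∘ₗ ω) ∧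
  (TensorProduct.map Δ ψ ∘ₗ Δ =
    (TensorProduct.assoc K A A A).symm.toLinearMap ∘ₗ TensorProduct.map ω Δ ∘ₗ Δ) ∧
  -- the structure maps pairwise commute
  (∀ a, α (ψ a) = ψ (α a)) ∧ (∀ a, α (ω a) = ω (α a)) ∧
  (∀ a, β (ψ a) = ψ (β a)) ∧ (∀ a, β (ω a) = ω (β a)) ∧
  -- `α, β` are coalgebra morphisms
  (TensorProduct.map α α ∘ₗ Δ = Δ ∘ₗ α) ∧
  (TensorProduct.map β β ∘ₗ Δ = Δ ∘ₗ β) ∧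
  -- `ψ, ω` are algebra morphisms
  (∀ a b, ψ (μ a b) = μ (ψ a) (ψ b)) ∧
  (∀ a b, ω (μ a b) = μ (ω a) (ω b)) ∧
  -- the `lam`-infinitesimal compatibility condition
  (∀ a b, Δ (μ a b) =
    TensorProduct.map (μ (ω a)) β (Δ b) +
    TensorProduct.map α (μ.flip (ψ b)) (Δ a) +
    lam • (α (ω a) ⊗ₜ[K] β (ψ b)))

/-- in a `lam`-infBH-bialgebra, `𝔇 = μ ∘ Δ` is a
`lam`-`(αω, βψ)`-derivation. -/
theorem stmt8 (K A : Type*) [Field K] [AddCommGroup A] [Module K A] (lam : K)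
    (μ : A →ₗ[K] A →ₗ[K] A) (Δ : A →ₗ[K] A ⊗[K] A) (α β ψ ω : A →ₗ[K] A)
    (hbi : IsInfBHBialgebra K A lam μ Δ α β ψ ω) :
    ∀ a b, (TensorProduct.lift μ ∘ₗ Δ) (μ a b) =
      μ (α (ω a)) ((TensorProduct.lift μ ∘ₗ Δ) b) +
      μ ((TensorProduct.lift μ ∘ₗ Δ) a) (β (ψ b)) +
      lam • μ (α (ω a)) (β (ψ b)) := by
  obtain ⟨h1, h2, h3, hassoc, h5, h6, h7, h8, h9, h10, h11, h12, h13, h14, h15, h16, hcomp⟩ := hbi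
  intro a b
  have key1 : ∀ x : A ⊗[K] A,
      TensorProduct.lift μ (TensorProduct.map (μ (ω a)) β x) = μ (α (ω a)) (TensorProduct.lift μ x) := by
    intro x
    induction x using TensorProduct.induction_on with
    | zero => simp
    | tmul u v => simp [hassoc]
    | add u v hu hv => simp [hu, hv]
  have key2 : ∀ x : A ⊗[K] A,
      TensorProduct.lift μ (TensorProduct.map α (μ.flip (ψ b)) x) = μ (TensorProduct.lift μ x) (β (ψ b)) := by
    intro x
    induction x using TensorProduct.induction_on with
    | zero => simp
    | tmul u v => simp [hassoc]
    | add u v hu hv => simp [hu, hv]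
  simp only [LinearMap.comp_apply, hcomp a b, map_add, map_smul, key1, key2,
    TensorProduct.lift.tmul]
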